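/- arXiv:2202.09985 — 2 statements merged into one kernel-verified Lean document; each statement's English description precedes it below -/
import Mathlib

section
/- Let (Q, F) be monopolist-optimal with Q an F-ICC allocation. Then κ'(Q(θL_F)) < θL_F, i.e., quality is inefficiently low at the bottom of the support of F. Moreover, if Q(θL_F) > 0, then ∫_{[θL_F, θH]} κ'(Q(θ)) dF(θ) ≤ (1 − F₋(θL_F))·θL_F. -/
open MeasureTheory Set Filter

/-- A cumulative distribution function on `[θL, θH]`. -/
structure CDF (θL θH : ℝ) where
  toFun : ℝ → ℝ
  mono : Monotone toFun
  right_continuous : ∀ x, ContinuousWithinAt toFun (Set.Ici x) x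
  eq_zero : ∀ x, x < θL → toFun x = 0
  eq_one : ∀ x, θH ≤ x → toFun x = 1

namespace CDF

variable {θL θH : ℝ}

/-- The Stieltjes function associated with a CDF. -/
noncomputable def stieltjes (F : CDF θL θH) : StieltjesFunction ℝ :=
  ⟨F.toFun, F.mono, F.right_continuous⟩

/-- The Lebesgue–Stieltjes measure of a CDF. -/
noncomputable def meas (F : CDF θL θH) : Measure ℝ := F.stieltjes.measure

/-- The integral `∫ φ dF`. -/
noncomputable def integ (F : CDF θL θH) (φ : ℝ → ℝ) : ℝ := ∫ θ, φ θ ∂F.meas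

/-- The support of the distribution with CDF `F`. -/
def supp (F : CDF θL θH) : Set ℝ :=
  {x | ∀ ε > 0, 0 < F.toFun (x + ε) - F.toFun (x - ε)}

/-- The left limit `F₋`. -/
noncomputable def leftLim (F : CDF θL θH) (x : ℝ) : ℝ := Function.leftLim F.toFun x

/-- The mean `∫ θ dF(θ)`. -/
noncomputable def mean (F : CDF θL θH) : ℝ := F.integ (fun θ => θ)

end CDF

/-- `I_F(θ) = ∫_{θL}^{θ} (F₀(t) − F(t)) dt`. -/
noncomputable def IFun {θL θH : ℝ} (F₀ F : CDF θL θH) (θ : ℝ) : ℝ :=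
  ∫ t in θL..θ, (F₀.toFun t - F.toFun t)

/-- `F ∈ 𝓘`: `F` is a feasible signal given the prior `F₀`. -/
def IsSignal {θL θH : ℝ} (F₀ F : CDF θL θH) : Prop :=
  (∀ θ ∈ Set.Icc θL θH, 0 ≤ IFun F₀ F θ) ∧ IFun F₀ F θH = 0

/-- The prior's support contains both endpoints. -/
def IsPrior {θL θH : ℝ} (F₀ : CDF θL θH) : Prop :=
  θL ∈ F₀.supp ∧ θH ∈ F₀.supp

/-- Assumptions on the information-cost function `c` (with derivatives `c'`, `c''`). -/
structure CostAssumptions (θL θH θ₀ : ℝ) (c c' c'' : ℝ → ℝ) : Prop where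
  cont : ContinuousOn c (Set.Icc θL θH)
  nonneg : ∀ θ ∈ Set.Icc θL θH, 0 ≤ c θ
  hasDeriv : ∀ θ ∈ Set.Ioo θL θH, HasDerivAt c (c' θ) θ
  hasDeriv2 : ∀ θ ∈ Set.Ioo θL θH, HasDerivAt c' (c'' θ) θ
  cont2 : ContinuousOn c'' (Set.Ioo θL θH)
  pos2 : ∀ θ ∈ Set.Ioo θL θH, 0 < c'' θ
  minAt : ∀ θ ∈ Set.Icc θL θH, c θ₀ ≤ c θ
  slopeBot : Filter.Tendsto c' (nhdsWithin θL (Set.Ioi θL)) Filter.atBot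
  slopeTop : Filter.Tendsto c' (nhdsWithin θH (Set.Iio θH)) Filter.atTop

/-- Assumptions on the production-cost function `κ` (with derivative `κ'`). -/
structure KappaAssumptions (θL θH qbar : ℝ) (κ κ' : ℝ → ℝ) : Prop where
  hasDeriv : ∀ q ∈ Set.Icc (0:ℝ) qbar, HasDerivWithinAt κ (κ' q) (Set.Icc 0 qbar) q
  contDeriv : ContinuousOn κ' (Set.Icc 0 qbar)
  strictMono : StrictMonoOn κ (Set.Icc 0 qbar)
  strictConvex : StrictConvexOn ℝ (Set.Icc 0 qbar) κ
  zero : κ 0 = 0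
  nonneg : ∀ q ∈ Set.Icc (0:ℝ) qbar, 0 ≤ κ q
  derivZero : κ' 0 ≤ θL
  derivTop : θH < κ' qbar

/-- An allocation: a nondecreasing map from types into `[0, q̄]`. -/
def IsAllocation (θL θH qbar : ℝ) (Q : ℝ → ℝ) : Prop :=
  MonotoneOn Q (Set.Icc θL θH) ∧ ∀ θ ∈ Set.Icc θL θH, Q θ ∈ Set.Icc 0 qbar

/-- The buyer's value `V_{Q,ū}(θ) = ū + ∫_{θL}^{θ} Q(t) dt`. -/
noncomputable def Vfun (θL : ℝ) (Q : ℝ → ℝ) (u θ : ℝ) : ℝ :=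
  u + ∫ t in θL..θ, Q t

/-- The mechanism `(Q, ū)` is `F`-incentive compatible. -/
def IsIC {θL θH : ℝ} (F₀ : CDF θL θH) (c : ℝ → ℝ) (Q : ℝ → ℝ) (u : ℝ)
    (F : CDF θL θH) : Prop :=
  IsSignal F₀ F ∧
  ∀ F' : CDF θL θH, IsSignal F₀ F' →
    F'.integ (fun θ => Vfun θL Q u θ - c θ) ≤ F.integ (fun θ => Vfun θL Q u θ - c θ)

/-- The monopolist's per-report profit `π_{Q,ū}(θ)`. -/
noncomputable def profit (θL : ℝ) (κ Q : ℝ → ℝ) (u θ : ℝ) : ℝ :=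
  θ * Q θ - Vfun θL Q u θ - κ (Q θ)

/-- `(Q, F)` is monopolist-optimal. -/
def MonopolistOptimal {θL θH : ℝ} (qbar : ℝ) (F₀ : CDF θL θH) (c κ : ℝ → ℝ)
    (Q : ℝ → ℝ) (F : CDF θL θH) : Prop :=
  IsAllocation θL θH qbar Q ∧ IsIC F₀ c Q 0 F ∧
  ∀ (Q' : ℝ → ℝ) (u' : ℝ) (F' : CDF θL θH),
    IsAllocation θL θH qbar Q' → 0 ≤ u' → IsIC F₀ c Q' u' F' →
    F'.integ (profit θL κ Q' u') ≤ F.integ (profit θL κ Q 0)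

/-- `P` is an `F`-shadow price. -/
def IsShadowPrice {θL θH : ℝ} (F₀ F : CDF θL θH) (P : ℝ → ℝ) : Prop :=
  (∃ K : NNReal, LipschitzOnWith K P (Set.Icc θL θH)) ∧
  ConvexOn ℝ (Set.Icc θL θH) P ∧
  ∀ a b : ℝ, Set.Ioo a b ⊆ {θ | θ ∈ Set.Icc θL θH ∧ 0 < IFun F₀ F θ} →
    ∃ m k : ℝ, ∀ θ ∈ Set.Ioo a b, P θ = m * θ + k

/-- `P` is an `F`-shadow price for `φ`. -/
def IsShadowPriceFor {θL θH : ℝ} (F₀ F : CDF θL θH) (φ P : ℝ → ℝ) : Prop :=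
  IsShadowPrice F₀ F P ∧ (∀ θ ∈ Set.Icc θL θH, φ θ ≤ P θ) ∧
  ∀ θ ∈ F.supp, P θ = φ θ

/-- `θL_F`, the minimum of the support of `F`. -/
noncomputable def thetaLF {θL θH : ℝ} (F : CDF θL θH) : ℝ := sInf F.supp

/-- `θH_F`, the maximum of the support of `F`. -/
noncomputable def thetaHF {θL θH : ℝ} (F : CDF θL θH) : ℝ := sSup F.supp

/-- `p` is an `F`-shadow derivative. -/
def IsShadowDeriv {θL θH : ℝ} (qbar : ℝ) (F₀ : CDF θL θH) (c' : ℝ → ℝ)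
    (F : CDF θL θH) (p : ℝ → ℝ) : Prop :=
  (∃ M : ℝ, ∀ θ ∈ Set.Icc θL θH, |p θ| ≤ M) ∧
  MonotoneOn p (Set.Icc θL θH) ∧
  (∀ a b : ℝ, Set.Ioo a b ⊆ {θ | θ ∈ Set.Icc θL θH ∧ 0 < IFun F₀ F θ} →
    ∀ x ∈ Set.Ioo a b, ∀ y ∈ Set.Ioo a b, p x = p y) ∧
  -c' (thetaLF F) ≤ p (thetaLF F) ∧
  p (thetaHF F) ≤ qbar - c' (thetaHF F)

/-- The allocation `Q^p` induced by a shadow derivative `p`. -/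
noncomputable def inducedAlloc {θL θH : ℝ} (qbar : ℝ) (c' : ℝ → ℝ)
    (F : CDF θL θH) (p : ℝ → ℝ) (θ : ℝ) : ℝ :=
  if θ < thetaLF F then max (p (thetaLF F) + c' θ) 0
  else if θ ≤ thetaHF F then p θ + c' θ
  else min (p (thetaHF F) + c' θ) qbar

/-- `Q` is `F`-information-cost-canceling. -/
def IsICC {θL θH : ℝ} (qbar : ℝ) (F₀ : CDF θL θH) (c' : ℝ → ℝ)
    (F : CDF θL θH) (Q : ℝ → ℝ) : Prop :=
  ∃ p : ℝ → ℝ, IsShadowDeriv qbar F₀ c' F p ∧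
    ∀ θ ∈ Set.Icc θL θH, Q θ = inducedAlloc qbar c' F p θ

/-- `φ` satisfies edge irrelevance: some maximizer over CDFs with the prior mean has
support in the open interval. -/
def EdgeIrrelevant {θL θH : ℝ} (F₀ : CDF θL θH) (φ : ℝ → ℝ) : Prop :=
  ∃ F' : CDF θL θH, F'.mean = F₀.mean ∧
    (∀ G : CDF θL θH, G.mean = F₀.mean → G.integ φ ≤ F'.integ φ) ∧
    F'.supp ⊆ Set.Ioo θL θH

/-- `θH_Q = inf {θ : Q(θ) = Q(θH)}`. -/
noncomputable def thetaHQ (θL θH : ℝ) (Q : ℝ → ℝ) : ℝ :=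
  sInf {θ | θ ∈ Set.Icc θL θH ∧ Q θ = Q θH}

/-- `θL_Q = sup {θ : Q(θ) = Q(θL)}`. -/
noncomputable def thetaLQ (θL θH : ℝ) (Q : ℝ → ℝ) : ℝ :=
  sSup {θ | θ ∈ Set.Icc θL θH ∧ Q θ = Q θL}

/-- The support of a (cumulative distribution) function `G : ℝ → ℝ`. -/
def suppOfFun (G : ℝ → ℝ) : Set ℝ := {x | ∀ ε > 0, 0 < G (x + ε) - G (x - ε)}

/-- The conditional CDF `F(·|θ ∈ [a, b])`. -/
noncomputable def condFun {θL θH : ℝ} (F : CDF θL θH) (a b θ : ℝ) : ℝ :=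
  if θ < a then 0
  else (F.toFun (min θ b) - F.leftLim a) / (F.toFun b - F.leftLim a)

/-!
The bottom `θL_F` of the support of `F` is an interior type: just above `θL` the allocation
`Q = p + c'` would be negative, since `c' → -∞` while the shadow derivative `p` is bounded, and
a signal cannot be a point mass at an endpoint of `Θ`, because `∫ F = ∫ F₀` lies strictly
between `0` and `θH - θL`. If `Q(θL_F) = 0` the claim is `κ'(0) ≤ θL < θL_F`.

Otherwise continuity of `c'` gives `Q ≥ Q(θL_F)/2` on some `[θL_F - δ, θH]`. Lowering `Q` by a
small `ε` there reduces the buyer's value by `h(θ) = ∫_{θL}^{θ} min(Q, ε)`, a function lying above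
its affine extension from the support of `F`; as every signal has the prior mean, `F` stays the
buyer's best signal. On the support the monopolist loses `ε θL_F - h(θL_F) ≤ ε (θL_F - δ)` in
revenue net of rent and saves at least `ε κ'(Q - ε)` in production cost, so optimality of `Q`
gives `∫ κ'(Q - ε) dF ≤ θL_F - δ`; letting `ε → 0` bounds `∫ κ'(Q) dF`, which dominates
`κ'(Q(θL_F))`.
-/

open scoped Topology

lemma integrable_of_integrableOn_of_ae_mem {α : Type*} [MeasurableSpace α] {μ : Measure α}
    {s : Set α} {f : α → ℝ} (hs : ∀ᵐ x ∂μ, x ∈ s) (hf : IntegrableOn f s μ) :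
    Integrable f μ := by
  rwa [IntegrableOn, Measure.restrict_eq_self_of_ae_mem hs] at hf

namespace CDF

variable {θL θH : ℝ} (G : CDF θL θH)

lemma nonneg (x : ℝ) : 0 ≤ G.toFun x := by
  have h0 := G.eq_zero (min x θL - 1) (by linarith [min_le_right x θL])
  linarith [G.mono (show min x θL - 1 ≤ x by linarith [min_le_left x θL])]

lemma le_one (x : ℝ) : G.toFun x ≤ 1 := by
  linarith [G.mono (le_max_left x θH), G.eq_one _ (le_max_right x θH)]

lemma tendsto_atTop : Tendsto G.toFun atTop (𝓝 1) :=
  tendsto_const_nhds.congr' <| (eventually_ge_atTop θH).mono fun x hx => (G.eq_one x hx).symm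

instance : IsProbabilityMeasure G.meas :=
  G.stieltjes.isProbabilityMeasure
    (tendsto_const_nhds.congr' <| (eventually_lt_atBot θL).mono fun x hx => (G.eq_zero x hx).symm)
    G.tendsto_atTop

lemma leftLim_eq_zero {a : ℝ} (h : ∀ x < a, G.toFun x = 0) : G.leftLim a = 0 :=
  leftLim_eq_of_tendsto <| tendsto_const_nhds.congr' <|
    eventually_nhdsWithin_of_forall fun x hx => (h x hx).symm

lemma ae_mem_Icc_of {a b : ℝ} (ha : ∀ x < a, G.toFun x = 0) (hb : G.toFun b = 1) :
    ∀ᵐ x ∂G.meas, x ∈ Icc a b := by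
  rw [ae_mem_iff_measure_eq measurableSet_Icc.nullMeasurableSet, measure_univ, meas,
    StieltjesFunction.measure_Icc]
  change ENNReal.ofReal (G.toFun b - G.leftLim a) = 1
  rw [hb, G.leftLim_eq_zero ha, sub_zero, ENNReal.ofReal_one]

lemma ae_mem_Icc : ∀ᵐ x ∂G.meas, x ∈ Icc θL θH :=
  G.ae_mem_Icc_of G.eq_zero (G.eq_one θH le_rfl)

lemma integrable_of_integrableOn {f : ℝ → ℝ} (hf : IntegrableOn f (Icc θL θH) G.meas) :
    Integrable f G.meas :=
  integrable_of_integrableOn_of_ae_mem G.ae_mem_Icc hf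

lemma measureReal_Ioi (y : ℝ) : G.meas.real (Ioi y) = 1 - G.toFun y := by
  rw [measureReal_def, meas, G.stieltjes.measure_Ioi G.tendsto_atTop]
  exact ENNReal.toReal_ofReal (sub_nonneg.2 (G.le_one y))


lemma integrable_id : Integrable (fun x => x) G.meas :=
  G.integrable_of_integrableOn (continuousOn_id.integrableOn_compact isCompact_Icc)

lemma mean_eq (hθ : θL ≤ θH) : G.mean = θH - ∫ t in θL..θH, G.toFun t := by
  have hint : Integrable (fun x => x - θL) G.meas := G.integrable_id.sub (integrable_const θL)
  have hnn : 0 ≤ᵐ[G.meas] fun x => x - θL := G.ae_mem_Icc.mono fun x hx => sub_nonneg.2 hx.1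
  have hlayer : ∫ x, (x - θL) ∂G.meas = θH - θL - ∫ t in θL..θH, G.toFun t :=
    calc ∫ x, (x - θL) ∂G.meas = ∫ t in Ioi 0, G.meas.real {x | t < x - θL} :=
          hint.integral_eq_integral_meas_lt hnn
      _ = ∫ t in Ioi 0, (1 - G.toFun (θL + t)) :=
          setIntegral_congr_fun measurableSet_Ioi fun t _ => by
            simp_rw [lt_sub_iff_add_lt']
            exact G.measureReal_Ioi _
      _ = ∫ t in Ioc 0 (θH - θL), (1 - G.toFun (θL + t)) :=
          setIntegral_eq_of_subset_of_forall_sdiff_eq_zero measurableSet_Ioi Ioc_subset_Ioi_self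
            fun t ht => by
              rw [G.eq_one _ (by linarith [not_le.1 fun h => ht.2 ⟨ht.1, h⟩]), sub_self]
      _ = θH - θL - ∫ t in θL..θH, G.toFun t := by
          have hmono : Monotone fun t => G.toFun (θL + t) := fun _ _ h => G.mono (by linarith)
          rw [← intervalIntegral.integral_of_le (sub_nonneg.2 hθ), intervalIntegral.integral_sub
            intervalIntegrable_const hmono.intervalIntegrable,
            intervalIntegral.integral_comp_add_left (fun s => G.toFun s)]
          simp
  have hshift : ∫ x, (x - θL) ∂G.meas = G.mean - θL := by
    rw [integral_sub G.integrable_id (integrable_const θL)]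
    simp [mean, integ]
  linarith

lemma integral_affine (a b : ℝ) : ∫ θ, (a * θ + b) ∂G.meas = a * G.mean + b := by
  rw [integral_add (G.integrable_id.const_mul a) (integrable_const b), integral_const_mul]
  simp [mean, integ]

lemma supp_subset_Icc : G.supp ⊆ Icc θL θH := by
  intro x hx
  constructor <;> by_contra! h
  · have := hx ((θL - x) / 2) (by linarith)
    rw [G.eq_zero _ (by linarith), G.eq_zero _ (by linarith)] at this
    linarith
  · have := hx ((x - θH) / 2) (by linarith)
    rw [G.eq_one _ (by linarith), G.eq_one _ (by linarith)] at this
    linarith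

lemma exists_mem_supp_forall_lt_eq_zero : ∃ a ∈ G.supp, ∀ x < a, G.toFun x = 0 := by
  set S := {x | G.toFun x = 0}
  have hne : S.Nonempty := ⟨θL - 1, G.eq_zero _ (by linarith)⟩
  have hbdd : BddAbove S := ⟨θH, fun x hx => not_lt.1 fun h =>
    one_ne_zero ((G.eq_one x h.le).symm.trans hx)⟩
  have hzero : ∀ x < sSup S, G.toFun x = 0 := fun x hx => by
    obtain ⟨y, hy, hxy⟩ := exists_lt_of_lt_csSup hne hx
    exact le_antisymm (hy ▸ G.mono hxy.le) (G.nonneg x)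
  refine ⟨sSup S, fun ε hε => ?_, hzero⟩
  rw [hzero (sSup S - ε) (by linarith), sub_zero]
  exact (G.nonneg _).lt_of_ne' fun h => by linarith [le_csSup hbdd (show _ ∈ S from h)]

lemma exists_mem_supp_forall_gt_eq_one : ∃ b ∈ G.supp, ∀ x, b < x → G.toFun x = 1 := by
  set S := {x | G.toFun x = 1}
  have hne : S.Nonempty := ⟨θH, G.eq_one _ le_rfl⟩
  have hbdd : BddBelow S := ⟨θL, fun x hx => not_lt.1 fun h =>
    zero_ne_one ((G.eq_zero x h).symm.trans hx)⟩
  have hone : ∀ x, sInf S < x → G.toFun x = 1 := fun x hx => by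
    obtain ⟨y, hy, hxy⟩ := exists_lt_of_csInf_lt hne hx
    exact le_antisymm (G.le_one x) (hy ▸ G.mono hxy.le)
  refine ⟨sInf S, fun ε hε => ?_, hone⟩
  rw [hone (sInf S + ε) (by linarith), sub_pos]
  exact (G.le_one _).lt_of_ne fun h => by linarith [csInf_le hbdd (show _ ∈ S from h)]

lemma bddBelow_supp : BddBelow G.supp := ⟨θL, fun _ hx => (G.supp_subset_Icc hx).1⟩

lemma bddAbove_supp : BddAbove G.supp := ⟨θH, fun _ hx => (G.supp_subset_Icc hx).2⟩

lemma integral_split {m : ℝ} :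
    ∫ t in θL..θH, G.toFun t = (∫ t in θL..m, G.toFun t) + ∫ t in m..θH, G.toFun t :=
  (intervalIntegral.integral_add_adjacent_intervals G.mono.intervalIntegrable
    G.mono.intervalIntegrable).symm

lemma integral_le_of_eq_zero {a : ℝ} (ha : a ∈ Icc θL θH) (h : ∀ x < a, G.toFun x = 0) :
    ∫ t in θL..θH, G.toFun t ≤ θH - a := by
  have h₁ : ∫ t in θL..a, G.toFun t ≤ ∫ _ in θL..a, (0 : ℝ) :=
    intervalIntegral.integral_mono_on_of_le_Ioo ha.1 G.mono.intervalIntegrable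
      intervalIntegrable_const fun x hx => (h x hx.2).le
  have h₂ : ∫ t in a..θH, G.toFun t ≤ ∫ _ in a..θH, (1 : ℝ) :=
    intervalIntegral.integral_mono_on ha.2 G.mono.intervalIntegrable intervalIntegrable_const
      fun x _ => G.le_one x
  simp only [intervalIntegral.integral_const, smul_eq_mul, mul_zero, mul_one] at h₁ h₂
  linarith [G.integral_split (m := a)]

lemma sub_le_integral_of_eq_one {b : ℝ} (hb : b ∈ Icc θL θH)
    (h : ∀ x, b < x → G.toFun x = 1) : θH - b ≤ ∫ t in θL..θH, G.toFun t := by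
  have h₁ : 0 ≤ ∫ t in θL..b, G.toFun t :=
    intervalIntegral.integral_nonneg hb.1 fun x _ => G.nonneg x
  have h₂ : ∫ _ in b..θH, (1 : ℝ) ≤ ∫ t in b..θH, G.toFun t :=
    intervalIntegral.integral_mono_on_of_le_Ioo hb.2 intervalIntegrable_const
      G.mono.intervalIntegrable fun x hx => (h x hx.1).ge
  simp only [intervalIntegral.integral_const, smul_eq_mul, mul_one] at h₂
  linarith [G.integral_split (m := b)]

lemma integral_pos_of_mem_supp (hθ : θL < θH) (hL : θL ∈ G.supp) :
    0 < ∫ t in θL..θH, G.toFun t := by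
  obtain ⟨m, hLm, hmH⟩ := exists_between hθ
  have hm : 0 < G.toFun m := by
    have := hL (m - θL) (by linarith)
    rwa [add_sub_cancel, G.eq_zero (θL - (m - θL)) (by linarith), sub_zero] at this
  have h₁ : 0 ≤ ∫ t in θL..m, G.toFun t :=
    intervalIntegral.integral_nonneg (by linarith) fun x _ => G.nonneg x
  have h₂ : ∫ _ in m..θH, G.toFun m ≤ ∫ t in m..θH, G.toFun t :=
    intervalIntegral.integral_mono_on (by linarith) intervalIntegrable_const
      G.mono.intervalIntegrable fun x hx => G.mono hx.1
  simp only [intervalIntegral.integral_const, smul_eq_mul] at h₂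
  nlinarith [G.integral_split (m := m)]

lemma integral_lt_of_mem_supp (hθ : θL < θH) (hH : θH ∈ G.supp) :
    ∫ t in θL..θH, G.toFun t < θH - θL := by
  obtain ⟨m, hLm, hmH⟩ := exists_between hθ
  have hm : G.toFun m < 1 := by
    have := hH (θH - m) (by linarith)
    rwa [sub_sub_cancel, G.eq_one (θH + (θH - m)) (by linarith), sub_pos] at this
  have h₁ : ∫ t in θL..m, G.toFun t ≤ ∫ _ in θL..m, G.toFun m :=
    intervalIntegral.integral_mono_on (by linarith) G.mono.intervalIntegrable
      intervalIntegrable_const fun x hx => G.mono hx.2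
  have h₂ : ∫ t in m..θH, G.toFun t ≤ ∫ _ in m..θH, (1 : ℝ) :=
    intervalIntegral.integral_mono_on (by linarith) G.mono.intervalIntegrable
      intervalIntegrable_const fun x _ => G.le_one x
  simp only [intervalIntegral.integral_const, smul_eq_mul, mul_one] at h₁ h₂
  nlinarith [G.integral_split (m := m)]

end CDF

section Support

variable {θL θH : ℝ} (G : CDF θL θH)

lemma thetaLF_le_of_mem {a : ℝ} (ha : a ∈ G.supp) : thetaLF G ≤ a := csInf_le G.bddBelow_supp ha

lemma le_thetaHF_of_mem {b : ℝ} (hb : b ∈ G.supp) : b ≤ thetaHF G := le_csSup G.bddAbove_supp hb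

lemma eq_zero_of_lt_thetaLF {x : ℝ} (hx : x < thetaLF G) : G.toFun x = 0 := by
  obtain ⟨a, ha, hzero⟩ := G.exists_mem_supp_forall_lt_eq_zero
  exact hzero x (hx.trans_le (thetaLF_le_of_mem G ha))

lemma eq_one_of_thetaHF_lt {x : ℝ} (hx : thetaHF G < x) : G.toFun x = 1 := by
  obtain ⟨b, hb, hone⟩ := G.exists_mem_supp_forall_gt_eq_one
  exact hone x ((le_thetaHF_of_mem G hb).trans_lt hx)

lemma thetaLF_mem_Icc : thetaLF G ∈ Icc θL θH := by
  obtain ⟨a, ha, -⟩ := G.exists_mem_supp_forall_lt_eq_zero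
  exact ⟨le_csInf ⟨a, ha⟩ fun x hx => (G.supp_subset_Icc hx).1,
    (thetaLF_le_of_mem G ha).trans (G.supp_subset_Icc ha).2⟩

lemma thetaHF_mem_Icc : thetaHF G ∈ Icc θL θH := by
  obtain ⟨b, hb, -⟩ := G.exists_mem_supp_forall_gt_eq_one
  exact ⟨(G.supp_subset_Icc hb).1.trans (le_thetaHF_of_mem G hb),
    csSup_le ⟨b, hb⟩ fun x hx => (G.supp_subset_Icc hx).2⟩

lemma thetaLF_le_thetaHF : thetaLF G ≤ thetaHF G := by
  obtain ⟨a, ha, -⟩ := G.exists_mem_supp_forall_lt_eq_zero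
  exact (thetaLF_le_of_mem G ha).trans (le_thetaHF_of_mem G ha)

lemma ae_mem_Icc_thetaLF : ∀ᵐ x ∂G.meas, x ∈ Icc (thetaLF G) θH :=
  G.ae_mem_Icc_of (fun _ hx => eq_zero_of_lt_thetaLF G hx) (G.eq_one θH le_rfl)

end Support

section Signal

variable {θL θH : ℝ} {F₀ G : CDF θL θH}

lemma IsSignal.integral_eq (h : IsSignal F₀ G) :
    ∫ t in θL..θH, G.toFun t = ∫ t in θL..θH, F₀.toFun t := by
  have h₂ := h.2
  rw [IFun, intervalIntegral.integral_sub F₀.mono.intervalIntegrable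
    G.mono.intervalIntegrable] at h₂
  linarith

lemma IsSignal.mean_eq (hθ : θL ≤ θH) (h : IsSignal F₀ G) : G.mean = F₀.mean := by
  rw [G.mean_eq hθ, F₀.mean_eq hθ, h.integral_eq]

end Signal

section InformationCostCanceling

variable {θL θH qbar : ℝ} {F₀ F : CDF θL θH} {c' Q : ℝ → ℝ}

lemma IsICC.thetaLF_mem_Ioo (hθ : θL < θH) (hF₀ : IsPrior F₀)
    (hc' : Tendsto c' (𝓝[>] θL) atBot) (hQ : IsAllocation θL θH qbar Q) (hF : IsSignal F₀ F)
    (hICC : IsICC qbar F₀ c' F Q) : thetaLF F ∈ Ioo θL θH := by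
  obtain ⟨p, ⟨⟨M, hM⟩, -⟩, hQp⟩ := hICC
  have hL := thetaLF_mem_Icc F
  refine ⟨hL.1.lt_of_ne fun heq => ?_, hL.2.lt_of_ne fun heq => ?_⟩
  · rcases (thetaLF_le_thetaHF F).lt_or_eq with hlt | hLH
    · obtain ⟨θ, hc'θ, hθL, hθH⟩ := ((hc'.eventually (eventually_lt_atBot (-M))).and
        (Ioo_mem_nhdsGT (heq.trans_lt hlt))).exists
      have hθ : θ ∈ Icc θL θH := ⟨hθL.le, hθH.le.trans (thetaHF_mem_Icc F).2⟩
      have hQθ : Q θ = p θ + c' θ := by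
        rw [hQp θ hθ, inducedAlloc, if_neg (not_lt.2 (heq.ge.trans hθL.le)), if_pos hθH.le]
      linarith [(hQ.2 θ hθ).1, (abs_le.1 (hM θ hθ)).2]
    · have := F.sub_le_integral_of_eq_one ⟨le_rfl, hθ.le⟩ fun x hx =>
        eq_one_of_thetaHF_lt F (by rwa [← hLH, ← heq])
      linarith [F₀.integral_lt_of_mem_supp hθ hF₀.2, hF.integral_eq]
  · have := F.integral_le_of_eq_zero hL fun x hx => eq_zero_of_lt_thetaLF F hx
    linarith [F₀.integral_pos_of_mem_supp hθ hF₀.1, hF.integral_eq]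

lemma IsICC.exists_forall_half_le (hICC : IsICC qbar F₀ c' F Q) (hQ : MonotoneOn Q (Icc θL θH))
    (hc' : ContinuousAt c' (thetaLF F)) (hL : thetaLF F ∈ Ioo θL θH) (hq : 0 < Q (thetaLF F)) :
    ∃ δ > 0, θL ≤ thetaLF F - δ ∧ ∀ θ ∈ Icc (thetaLF F - δ) θH, Q (thetaLF F) / 2 ≤ Q θ := by
  obtain ⟨p, -, hQp⟩ := hICC
  set tL := thetaLF F
  have htL : tL ∈ Icc θL θH := Ioo_subset_Icc_self hL
  have hQtL : Q tL = p tL + c' tL := by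
    rw [hQp tL htL, inducedAlloc, if_neg (lt_irrefl _), if_pos (thetaLF_le_thetaHF F)]
  have hev : ∀ᶠ t in 𝓝[<] tL, θL < t ∧ Q tL / 2 ≤ Q t := by
    filter_upwards [nhdsWithin_le_nhds (Ioi_mem_nhds hL.1),
      nhdsWithin_le_nhds (hc'.eventually (Ioi_mem_nhds (by linarith : c' tL - Q tL / 2 < c' tL))),
      self_mem_nhdsWithin] with t hLt hc't htL'
    refine ⟨hLt, ?_⟩
    rw [hQp t ⟨hLt.le, htL'.out.le.trans htL.2⟩, inducedAlloc, if_pos htL'.out]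
    exact le_max_of_le_left (by linarith [show c' tL - Q tL / 2 < c' t from hc't])
  obtain ⟨l, hl, hsub⟩ := mem_nhdsLT_iff_exists_Ico_subset.1 hev
  refine ⟨tL - l, sub_pos.2 hl, by linarith [(hsub ⟨le_rfl, hl⟩).1], fun θ hθ => ?_⟩
  rw [sub_sub_cancel] at hθ
  rcases lt_or_ge θ tL with h | h
  · exact (hsub ⟨hθ.1, h⟩).2
  · linarith [hQ htL ⟨htL.1.trans h, hθ.2⟩ h]

end InformationCostCanceling

section Vfun

variable {θL ε a b : ℝ} {g : ℝ → ℝ}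

lemma vfun_eq_add_of_eqOn (hga : IntervalIntegrable g volume θL a)
    (hgb : IntervalIntegrable g volume θL b) (hab : a ≤ b) (h : ∀ t ∈ Icc a b, g t = ε) :
    Vfun θL g 0 b = Vfun θL g 0 a + ε * (b - a) := by
  have hsub := intervalIntegral.integral_interval_sub_left hgb hga
  rw [intervalIntegral.integral_congr (a := a) (g := fun _ => ε) (by rwa [uIcc_of_le hab]),
    intervalIntegral.integral_const, smul_eq_mul] at hsub
  simp only [Vfun, zero_add]
  linarith

lemma vfun_add_le_of_le (hga : IntervalIntegrable g volume θL a)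
    (hgb : IntervalIntegrable g volume θL b) (hab : a ≤ b) (h : ∀ t ∈ Icc a b, g t ≤ ε) :
    Vfun θL g 0 b + ε * (a - b) ≤ Vfun θL g 0 a := by
  have hsub := intervalIntegral.integral_interval_sub_left hgb hga
  have hle := intervalIntegral.integral_mono_on hab (hga.symm.trans hgb) intervalIntegrable_const h
  simp only [Vfun, zero_add, intervalIntegral.integral_const, smul_eq_mul] at hsub hle ⊢
  linarith

end Vfun

namespace IsAllocation

variable {θL θH qbar : ℝ} {Q : ℝ → ℝ} (hQ : IsAllocation θL θH qbar Q)
include hQ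

lemma intervalIntegrable {a b : ℝ} (ha : a ∈ Icc θL θH) (hb : b ∈ Icc θL θH) :
    IntervalIntegrable Q volume a b :=
  (hQ.1.mono (uIcc_subset_Icc ha hb)).intervalIntegrable

lemma max_sub_const {ε : ℝ} (hε : 0 ≤ ε) : IsAllocation θL θH qbar fun θ => max (Q θ - ε) 0 :=
  ⟨fun _ hx _ hy hxy => max_le_max_right 0 (sub_le_sub_right (hQ.1 hx hy hxy) ε),
    fun θ hθ => ⟨le_max_right _ _,
      max_le (by linarith [(hQ.2 θ hθ).2]) ((hQ.2 θ hθ).1.trans (hQ.2 θ hθ).2)⟩⟩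

lemma min_const {ε : ℝ} (hε : 0 ≤ ε) : IsAllocation θL θH qbar fun θ => min (Q θ) ε :=
  ⟨fun _ hx _ hy hxy => min_le_min_right ε (hQ.1 hx hy hxy),
    fun θ hθ => ⟨le_min (hQ.2 θ hθ).1 hε, (min_le_left _ _).trans (hQ.2 θ hθ).2⟩⟩

lemma monotoneOn_vfun : MonotoneOn (Vfun θL Q 0) (Icc θL θH) := fun x hx y hy hxy => by
  simp only [Vfun, zero_add]
  exact intervalIntegral.integral_mono_interval le_rfl hx.1 hxy
    ((ae_restrict_mem measurableSet_Ioc).mono fun t ht => (hQ.2 t ⟨ht.1.le, ht.2.trans hy.2⟩).1)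
    (hQ.intervalIntegrable ⟨le_rfl, hy.1.trans hy.2⟩ hy)

lemma vfun_nonneg {θ : ℝ} (hθ : θ ∈ Icc θL θH) : 0 ≤ Vfun θL Q 0 θ := by
  simpa [Vfun] using hQ.monotoneOn_vfun ⟨le_rfl, hθ.1.trans hθ.2⟩ hθ hθ.1

lemma integrable_vfun (G : CDF θL θH) : Integrable (Vfun θL Q 0) G.meas :=
  G.integrable_of_integrableOn (hQ.monotoneOn_vfun.integrableOn_isCompact isCompact_Icc)

lemma integrable_profit {κ : ℝ → ℝ} (hκ : MonotoneOn κ (Icc 0 qbar)) (G : CDF θL θH) :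
    Integrable (profit θL κ Q 0) G.meas := by
  have hκQ : MonotoneOn (fun θ => κ (Q θ)) (Icc θL θH) := fun _ hx _ hy hxy =>
    hκ (hQ.2 _ hx) (hQ.2 _ hy) (hQ.1 hx hy hxy)
  exact G.integrable_of_integrableOn
    ((((hQ.1.integrableOn_isCompact isCompact_Icc).continuousOn_mul continuousOn_id
      isCompact_Icc).sub (hQ.monotoneOn_vfun.integrableOn_isCompact isCompact_Icc)).sub
      (hκQ.integrableOn_isCompact isCompact_Icc))

lemma vfun_eq_vfun_max_sub_add {ε : ℝ} (hε : 0 ≤ ε) {θ : ℝ} (hθ : θ ∈ Icc θL θH) :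
    Vfun θL Q 0 θ =
      Vfun θL (fun t => max (Q t - ε) 0) 0 θ + Vfun θL (fun t => min (Q t) ε) 0 θ := by
  have hθL : θL ∈ Icc θL θH := ⟨le_rfl, hθ.1.trans hθ.2⟩
  simp only [Vfun, zero_add]
  rw [← intervalIntegral.integral_add ((hQ.max_sub_const hε).intervalIntegrable hθL hθ)
    ((hQ.min_const hε).intervalIntegrable hθL hθ)]
  congr 1 with t
  rcases le_total (Q t) ε with h | h
  · rw [max_eq_right (by linarith), min_eq_left h, zero_add]
  · rw [max_eq_left (by linarith), min_eq_right h, sub_add_cancel]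

lemma vfun_min_eq_add {ε m θ : ℝ} (hε : 0 ≤ ε) (hm : θL ≤ m) (hmθ : m ≤ θ) (hθ : θ ≤ θH)
    (hQε : ∀ t ∈ Icc m θ, ε ≤ Q t) :
    Vfun θL (fun t => min (Q t) ε) 0 θ = Vfun θL (fun t => min (Q t) ε) 0 m + ε * (θ - m) :=
  have hθL : θL ∈ Icc θL θH := ⟨le_rfl, hm.trans (hmθ.trans hθ)⟩
  vfun_eq_add_of_eqOn ((hQ.min_const hε).intervalIntegrable hθL ⟨hm, hmθ.trans hθ⟩)
    ((hQ.min_const hε).intervalIntegrable hθL ⟨hm.trans hmθ, hθ⟩) hmθ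
    fun t ht => min_eq_right (hQε t ht)

end IsAllocation

namespace KappaAssumptions

variable {θL θH qbar : ℝ} {κ κ' : ℝ → ℝ} (hκ : KappaAssumptions θL θH qbar κ κ')
include hκ

lemma deriv_mul_sub_le {x y : ℝ} (hx : x ∈ Icc 0 qbar) (hy : y ∈ Icc 0 qbar) (hxy : x < y) :
    κ' x * (y - x) ≤ κ y - κ x := by
  have := hκ.strictConvex.convexOn.le_slope_of_hasDerivWithinAt hx hy hxy (hκ.hasDeriv x hx)
  rwa [slope_def_field, le_div_iff₀ (sub_pos.2 hxy)] at this

lemma monotoneOn_deriv : MonotoneOn κ' (Icc 0 qbar) := fun x hx y hy hxy => by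
  rcases hxy.eq_or_lt with rfl | hlt
  · rfl
  · exact (hκ.strictConvex.convexOn.le_slope_of_hasDerivWithinAt hx hy hlt
      (hκ.hasDeriv x hx)).trans
      (hκ.strictConvex.convexOn.slope_le_of_hasDerivWithinAt hx hy hlt (hκ.hasDeriv y hy))

lemma integrable_deriv_comp_sub {Q : ℝ → ℝ} (hQ : IsAllocation θL θH qbar Q) {F : CDF θL θH}
    {ε : ℝ} (hε : 0 ≤ ε) (hQε : ∀ θ ∈ Icc (thetaLF F) θH, ε ≤ Q θ) :
    Integrable (fun θ => κ' (Q θ - ε)) F.meas := by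
  have hsub : Icc (thetaLF F) θH ⊆ Icc θL θH := Icc_subset_Icc_left (thetaLF_mem_Icc F).1
  have hmem : ∀ θ ∈ Icc (thetaLF F) θH, Q θ - ε ∈ Icc 0 qbar := fun θ hθ =>
    ⟨sub_nonneg.2 (hQε θ hθ), by linarith [(hQ.2 θ (hsub hθ)).2]⟩
  exact integrable_of_integrableOn_of_ae_mem (ae_mem_Icc_thetaLF F)
    (MonotoneOn.integrableOn_isCompact isCompact_Icc fun x hx y hy hxy =>
      hκ.monotoneOn_deriv (hmem x hx) (hmem y hy)
        (sub_le_sub_right (hQ.1 (hsub hx) (hsub hy) hxy) ε))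

end KappaAssumptions

lemma integral_comp_le_of_integral_comp_sub_le {α : Type*} [MeasurableSpace α] {μ : Measure α}
    [IsFiniteMeasure μ] {g : ℝ → ℝ} {f : α → ℝ} {b η B : ℝ} (hg : ContinuousOn g (Icc 0 b))
    (hη : 0 < η) (hf : ∀ᵐ x ∂μ, f x ∈ Icc η b)
    (hmeas : ∀ ε ∈ Ioc 0 η, AEStronglyMeasurable (fun x => g (f x - ε)) μ)
    (hle : ∀ ε ∈ Ioc 0 η, ∫ x, g (f x - ε) ∂μ ≤ B) :
    ∫ x, g (f x) ∂μ ≤ B := by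
  obtain ⟨K, hK⟩ := isCompact_Icc.exists_bound_of_continuousOn hg
  have hsmall : ∀ᶠ ε in 𝓝[>] 0, ε ∈ Ioc 0 η := Ioc_mem_nhdsGT hη
  have hmem : ∀ x, f x ∈ Icc η b → ∀ ε ∈ Ioc 0 η, f x - ε ∈ Icc 0 b := fun x hx ε hε =>
    ⟨by linarith [hx.1, hε.2], by linarith [hx.2, hε.1]⟩
  refine le_of_tendsto (tendsto_integral_filter_of_dominated_convergence (fun _ => K)
    (hsmall.mono hmeas) (hsmall.mono fun ε hε => hf.mono fun x hx => hK _ (hmem x hx ε hε))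
    (integrable_const K) (hf.mono fun x hx => ?_)) (hsmall.mono hle)
  have hlim : Tendsto (fun ε => f x - ε) (𝓝[>] 0) (𝓝[Icc 0 b] (f x)) :=
    tendsto_nhdsWithin_iff.2 ⟨by simpa using (tendsto_nhdsWithin_of_tendsto_nhds
      (tendsto_const_nhds.sub tendsto_id) : Tendsto (fun ε => f x - ε) (𝓝[>] 0) (𝓝 (f x - 0))),
      hsmall.mono (hmem x hx)⟩
  exact (hg (f x) ⟨hη.le.trans hx.1, hx.2⟩).tendsto.comp hlim

section Perturbation

variable {θL θH qbar : ℝ} {F₀ F : CDF θL θH} {c κ κ' Q : ℝ → ℝ}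

lemma IsIC.of_vfun_eq_sub {Q' h : ℝ → ℝ} {a b : ℝ} (hθ : θL ≤ θH) (hIC : IsIC F₀ c Q 0 F)
    (hu : ∀ G : CDF θL θH, Integrable (fun θ => Vfun θL Q 0 θ - c θ) G.meas)
    (hh : ∀ G : CDF θL θH, Integrable h G.meas)
    (hV : ∀ θ ∈ Icc θL θH, Vfun θL Q' 0 θ = Vfun θL Q 0 θ - h θ)
    (hle : ∀ θ ∈ Icc θL θH, a * θ + b ≤ h θ) (heq : ∀ᵐ θ ∂F.meas, h θ = a * θ + b) :
    IsIC F₀ c Q' 0 F := by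
  have hsplit : ∀ G : CDF θL θH, G.integ (fun θ => Vfun θL Q' 0 θ - c θ) =
      G.integ (fun θ => Vfun θL Q 0 θ - c θ) - ∫ θ, h θ ∂G.meas := fun G => by
    rw [CDF.integ, CDF.integ, ← integral_sub (hu G) (hh G)]
    exact integral_congr_ae (G.ae_mem_Icc.mono fun θ hθ => by simp only [hV θ hθ]; ring)
  refine ⟨hIC.1, fun G hG => ?_⟩
  have hGle : ∫ θ, (a * θ + b) ∂G.meas ≤ ∫ θ, h θ ∂G.meas :=
    integral_mono_ae ((G.integrable_id.const_mul a).add (integrable_const b)) (hh G)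
      (G.ae_mem_Icc.mono fun θ hθ => hle θ hθ)
  rw [hsplit, hsplit, integral_congr_ae heq, F.integral_affine, hIC.1.mean_eq hθ]
  rw [G.integral_affine, hG.mean_eq hθ] at hGle
  linarith [hIC.2 G hG]

lemma IsIC.max_sub_const (hθ : θL ≤ θH) (hQ : IsAllocation θL θH qbar Q)
    (hc : ContinuousOn c (Icc θL θH)) (hIC : IsIC F₀ c Q 0 F) {ε : ℝ} (hε : 0 ≤ ε)
    (hQε : ∀ θ ∈ Icc (thetaLF F) θH, ε ≤ Q θ) :
    IsIC F₀ c (fun θ => max (Q θ - ε) 0) 0 F := by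
  set tL := thetaLF F
  set V := Vfun θL (fun t => min (Q t) ε) 0
  have htL := thetaLF_mem_Icc F
  have hg := hQ.min_const hε
  have hflat : ∀ θ ∈ Icc tL θH, V θ = V tL + ε * (θ - tL) := fun θ hθ =>
    hQ.vfun_min_eq_add hε htL.1 hθ.1 hθ.2 fun t ht => hQε t ⟨ht.1, ht.2.trans hθ.2⟩
  refine hIC.of_vfun_eq_sub hθ (a := ε) (b := V tL - ε * tL)
    (fun G => (hQ.integrable_vfun G).sub
      (G.integrable_of_integrableOn (hc.integrableOn_compact isCompact_Icc)))
    hg.integrable_vfun (fun θ hθ => by linarith [hQ.vfun_eq_vfun_max_sub_add hε hθ])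
    (fun θ hθ => ?_) ((ae_mem_Icc_thetaLF F).mono fun θ hθ => by linarith [hflat θ hθ])
  rcases le_total θ tL with h | h
  · have hθL : θL ∈ Icc θL θH := ⟨le_rfl, hθ.1.trans hθ.2⟩
    linarith [vfun_add_le_of_le (hg.intervalIntegrable hθL hθ) (hg.intervalIntegrable hθL htL) h
      fun t _ => min_le_right (Q t) ε]
  · linarith [hflat θ ⟨h, hθ.2⟩]

theorem MonopolistOptimal.integral_deriv_sub_le (hθ : θL ≤ θH)
    (hκ : KappaAssumptions θL θH qbar κ κ') (hc : ContinuousOn c (Icc θL θH))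
    (hopt : MonopolistOptimal qbar F₀ c κ Q F) {δ ε : ℝ} (hδ : 0 ≤ δ)
    (hδL : θL ≤ thetaLF F - δ) (hε : 0 < ε) (hQε : ∀ θ ∈ Icc (thetaLF F - δ) θH, ε ≤ Q θ) :
    ∫ θ, κ' (Q θ - ε) ∂F.meas ≤ thetaLF F - δ := by
  obtain ⟨hQ, hIC, hbest⟩ := hopt
  set tL := thetaLF F
  set V := Vfun θL (fun t => min (Q t) ε) 0
  have htL := thetaLF_mem_Icc F
  have hg := hQ.min_const hε.le
  have hQε' : ∀ θ ∈ Icc tL θH, ε ≤ Q θ := fun θ hθ => hQε θ ⟨by linarith [hθ.1], hθ.2⟩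
  have hflat : ∀ θ ∈ Icc tL θH, V θ = V tL + ε * (θ - tL) := fun θ hθ =>
    hQ.vfun_min_eq_add hε.le htL.1 hθ.1 hθ.2 fun t ht => hQε' t ⟨ht.1, ht.2.trans hθ.2⟩
  have hrent : ε * δ ≤ V tL := by
    have hδ' : tL - δ ∈ Icc θL θH := ⟨hδL, by linarith [htL.2]⟩
    linarith [hg.vfun_nonneg hδ', hQ.vfun_min_eq_add hε.le hδL (by linarith) htL.2
      fun t ht => hQε t ⟨ht.1, ht.2.trans htL.2⟩]
  have hκmono : MonotoneOn κ (Icc 0 qbar) := hκ.strictMono.monotoneOn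
  have hQ' := hQ.max_sub_const hε.le
  have hgain : ∀ᵐ θ ∂F.meas, profit θL κ Q 0 θ - profit θL κ (fun t => max (Q t - ε) 0) 0 θ ≤
      (ε * tL - V tL) - ε * κ' (Q θ - ε) := by
    filter_upwards [ae_mem_Icc_thetaLF F] with θ hθ
    have hθ' : θ ∈ Icc θL θH := ⟨htL.1.trans hθ.1, hθ.2⟩
    have hQθ := hQ.2 θ hθ'
    have hmarg := hκ.deriv_mul_sub_le (x := Q θ - ε) ⟨by linarith [hQε' θ hθ], by linarith [hQθ.2]⟩
      hQθ (by linarith)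
    simp only [profit, max_eq_left (sub_nonneg.2 (hQε' θ hθ))]
    rw [sub_sub_cancel] at hmarg
    nlinarith [hQ.vfun_eq_vfun_max_sub_add hε.le hθ', hflat θ hθ]
  have hint := hκ.integrable_deriv_comp_sub hQ hε.le hQε'
  have hmono : ∫ θ, (profit θL κ Q 0 θ - profit θL κ (fun t => max (Q t - ε) 0) 0 θ) ∂F.meas ≤
      ∫ θ, ((ε * tL - V tL) - ε * κ' (Q θ - ε)) ∂F.meas :=
    integral_mono_ae ((hQ.integrable_profit hκmono F).sub (hQ'.integrable_profit hκmono F))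
      ((integrable_const _).sub (hint.const_mul ε)) hgain
  rw [integral_sub (hQ.integrable_profit hκmono F) (hQ'.integrable_profit hκmono F),
    integral_sub (integrable_const _) (hint.const_mul ε), integral_const, integral_const_mul,
    probReal_univ, one_smul] at hmono
  have hprofit := hbest _ 0 F hQ' le_rfl (hIC.max_sub_const hθ hQ hc hε.le hQε')
  rw [CDF.integ, CDF.integ] at hprofit
  exact le_of_mul_le_mul_left (by nlinarith) hε

end Perturbation

theorem statement18_general {θL θH : ℝ} (hθ : θL < θH)
    (F₀ : CDF θL θH) (hF₀ : IsPrior F₀)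
    (c c' c'' : ℝ → ℝ) (hc : CostAssumptions θL θH F₀.mean c c' c'')
    (qbar : ℝ)
    (κ κ' : ℝ → ℝ) (hκ : KappaAssumptions θL θH qbar κ κ')
    (Q : ℝ → ℝ) (F : CDF θL θH)
    (hopt : MonopolistOptimal qbar F₀ c κ Q F)
    (hICC : IsICC qbar F₀ c' F Q) :
    κ' (Q (thetaLF F)) < thetaLF F ∧
    (0 < Q (thetaLF F) →
      (∫ θ in Set.Icc (thetaLF F) θH, κ' (Q θ) ∂F.meas) ≤
        (1 - F.leftLim (thetaLF F)) * thetaLF F) := by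
  have hQ := hopt.1
  have htL := hICC.thetaLF_mem_Ioo hθ hF₀ hc.slopeBot hQ hopt.2.1.1
  set tL := thetaLF F
  have hsupp : Icc tL θH ⊆ Icc θL θH := Icc_subset_Icc_left htL.1.le
  rcases (hQ.2 tL (Ioo_subset_Icc_self htL)).1.eq_or_lt with hq | hq
  · rw [← hq]
    exact ⟨hκ.derivZero.trans_lt htL.1, fun h => absurd h (lt_irrefl 0)⟩
  obtain ⟨δ, hδ, hδL, hQδ⟩ :=
    hICC.exists_forall_half_le hQ.1 (hc.hasDeriv2 tL htL).continuousAt htL hq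
  have hQhalf : ∀ θ ∈ Icc tL θH, Q tL / 2 ≤ Q θ := fun θ hθ =>
    hQδ θ ⟨by linarith [hθ.1], hθ.2⟩
  have hbound : ∫ θ, κ' (Q θ) ∂F.meas ≤ tL - δ :=
    integral_comp_le_of_integral_comp_sub_le hκ.contDeriv (half_pos hq)
      ((ae_mem_Icc_thetaLF F).mono fun θ hθ => ⟨hQhalf θ hθ, (hQ.2 θ (hsupp hθ)).2⟩)
      (fun ε hε => (hκ.integrable_deriv_comp_sub hQ hε.1.le fun θ hθ =>
        hε.2.trans (hQhalf θ hθ)).aestronglyMeasurable)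
      fun ε hε => hopt.integral_deriv_sub_le hθ.le hκ hc.cont hδ.le hδL hε.1 fun θ hθ =>
        hε.2.trans (hQδ θ hθ)
  have hmarg : κ' (Q tL) ≤ ∫ θ, κ' (Q θ) ∂F.meas := by
    have hint : Integrable (fun θ => κ' (Q θ)) F.meas := by
      simpa using hκ.integrable_deriv_comp_sub hQ le_rfl fun θ hθ => (hQ.2 θ (hsupp hθ)).1
    simpa using integral_mono_ae (integrable_const (κ' (Q tL))) hint
      ((ae_mem_Icc_thetaLF F).mono fun θ hθ => hκ.monotoneOn_deriv
        (hQ.2 tL (Ioo_subset_Icc_self htL)) (hQ.2 θ (hsupp hθ))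
        (hQ.1 (Ioo_subset_Icc_self htL) (hsupp hθ) hθ.1))
  refine ⟨by linarith, fun _ => ?_⟩
  rw [Measure.restrict_eq_self_of_ae_mem (ae_mem_Icc_thetaLF F),
    F.leftLim_eq_zero fun x hx => eq_zero_of_lt_thetaLF F hx]
  linarith

theorem statement18 {θL θH : ℝ} (hθL : 0 ≤ θL) (hθ : θL < θH)
    (F₀ : CDF θL θH) (hF₀ : IsPrior F₀)
    (c c' c'' : ℝ → ℝ) (hc : CostAssumptions θL θH F₀.mean c c' c'')
    (qbar : ℝ) (hqbar : 0 < qbar)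
    (κ κ' : ℝ → ℝ) (hκ : KappaAssumptions θL θH qbar κ κ')
    (Q : ℝ → ℝ) (F : CDF θL θH)
    (hopt : MonopolistOptimal qbar F₀ c κ Q F)
    (hICC : IsICC qbar F₀ c' F Q) :
    κ' (Q (thetaLF F)) < thetaLF F ∧
    (0 < Q (thetaLF F) →
      (∫ θ in Set.Icc (thetaLF F) θH, κ' (Q θ) ∂F.meas) ≤
        (1 - F.leftLim (thetaLF F)) * thetaLF F) :=
  statement18_general hθ F₀ hF₀ c c' c'' hc qbar κ κ' hκ Q F hopt hICC
end

section
/- Let F ∈ 𝓘 with supp F ⊂ (θL, θH) and let Q be an F-ICC allocation with F-shadow derivative p_Q. Suppose θ₁, θ₂ ∈ (θL_F, θH_F] with θ₁ < θ₂ and I_F(θ₁) = I_F(θ₂) = 0. Define p̃ : Θ → ℝ by p̃(θ) = p_Q(θ) for θ ≤ θ₁, p̃(θ) = p_Q(θ₁) for θ ∈ [θ₁, θ₂], and p̃(θ) = p_Q(θ) − (p_Q(θ₂) − p_Q(θ₁)) for θ ≥ θ₂. Then p̃ is an F-shadow derivative, and hence its induced allocation Q^{p̃} is an F-ICC allocation.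 -/
open MeasureTheory Set Filter

/-!
Flattening `p` on `[θ₁, θ₂]` and shifting it down by `p θ₂ - p θ₁` to the right of `θ₂` keeps it
bounded and nondecreasing. Since `I_F` vanishes at `θ₁` and `θ₂`, every open interval on which
`I_F > 0` lies on one side of each of them, where the new function is `p` up to a constant, so it is
still constant there. The boundary conditions survive because the new function agrees with `p` up
to `θ₁ > θL_F` and lies below `p` everywhere.
-/

noncomputable def flattenBetween (p : ℝ → ℝ) (θ₁ θ₂ θ : ℝ) : ℝ :=
  if θ ≤ θ₁ then p θ else if θ ≤ θ₂ then p θ₁ else p θ - (p θ₂ - p θ₁)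

section flattenBetween

variable {p : ℝ → ℝ} {s : Set ℝ} {θ₁ θ₂ θ : ℝ}

lemma flattenBetween_of_le (h : θ ≤ θ₁) : flattenBetween p θ₁ θ₂ θ = p θ := if_pos h

lemma abs_flattenBetween_le {M : ℝ} (hM : ∀ θ ∈ s, |p θ| ≤ M) (h₁ : θ₁ ∈ s) (h₂ : θ₂ ∈ s)
    (hθ : θ ∈ s) : |flattenBetween p θ₁ θ₂ θ| ≤ 3 * M := by
  have hp := abs_le.mp (hM θ hθ)
  have hp₁ := abs_le.mp (hM θ₁ h₁)
  have hp₂ := abs_le.mp (hM θ₂ h₂)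
  rw [abs_le]
  unfold flattenBetween
  split_ifs <;> constructor <;> linarith

lemma MonotoneOn.flattenBetween (hp : MonotoneOn p s) (h₁ : θ₁ ∈ s) (h₂ : θ₂ ∈ s) :
    MonotoneOn (flattenBetween p θ₁ θ₂) s := by
  intro x hx y hy hxy
  unfold _root_.flattenBetween
  split_ifs with hx₁ hy₁ hy₂ hx₂ hy₁ hy₂ hy₁ hy₂
  · exact hp hx hy hxy
  · exact hp hx h₁ hx₁
  · linarith [hp hx h₁ hx₁, hp h₂ hy (not_le.mp hy₂).le]
  · exact absurd (hxy.trans hy₁) hx₁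
  · exact le_rfl
  · linarith [hp h₂ hy (not_le.mp hy₂).le]
  · exact absurd (hxy.trans hy₁) hx₁
  · exact absurd (hxy.trans hy₂) hx₂
  · linarith [hp hx hy hxy]

lemma flattenBetween_le (hp : MonotoneOn p s) (h₁ : θ₁ ∈ s) (h₂ : θ₂ ∈ s) (h₁₂ : θ₁ ≤ θ₂)
    (hθ : θ ∈ s) : flattenBetween p θ₁ θ₂ θ ≤ p θ := by
  unfold flattenBetween
  split_ifs with hθ₁ hθ₂
  · exact le_rfl
  · exact hp h₁ hθ (not_le.mp hθ₁).le
  · linarith [hp h₁ h₂ h₁₂]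

lemma le_iff_le_of_notMem_Ioo {α : Type*} [LinearOrder α] {a b x y θ : α} (hθ : θ ∉ Ioo a b) (hx : x ∈ Ioo a b)
    (hy : y ∈ Ioo a b) : x ≤ θ ↔ y ≤ θ := by
  have key : ∀ {x y}, x ∈ Ioo a b → y ∈ Ioo a b → x ≤ θ → y ≤ θ := fun hx hy hxθ =>
    not_lt.mp fun hθy => hθ ⟨hx.1.trans_le hxθ, hθy.trans hy.2⟩
  exact ⟨key hx hy, key hy hx⟩

lemma flattenBetween_eq_of_notMem_Ioo {a b x y : ℝ} (h₁ : θ₁ ∉ Ioo a b) (h₂ : θ₂ ∉ Ioo a b)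
    (hx : x ∈ Ioo a b) (hy : y ∈ Ioo a b) (hpxy : p x = p y) :
    flattenBetween p θ₁ θ₂ x = flattenBetween p θ₁ θ₂ y := by
  unfold flattenBetween
  simp only [le_iff_le_of_notMem_Ioo h₁ hx hy, le_iff_le_of_notMem_Ioo h₂ hx hy, hpxy]

end flattenBetween

section support

variable {θL θH : ℝ} {F : CDF θL θH}

lemma CDF.supp_nonempty_of_thetaLF_lt_thetaHF (h : thetaLF F < thetaHF F) : F.supp.Nonempty := by
  by_contra hempty
  rw [not_nonempty_iff_eq_empty] at hempty
  simp [thetaLF, thetaHF, hempty] at h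

lemma le_thetaLF (hsupp : F.supp ⊆ Ioo θL θH) (hne : F.supp.Nonempty) : θL ≤ thetaLF F :=
  le_csInf hne fun _ hx => (hsupp hx).1.le

lemma thetaHF_le (hsupp : F.supp ⊆ Ioo θL θH) (hne : F.supp.Nonempty) : thetaHF F ≤ θH :=
  csSup_le hne fun _ hx => (hsupp hx).2.le

end support

lemma notMem_Ioo_of_IFun_eq_zero {θL θH a b θ : ℝ} {F₀ F : CDF θL θH}
    (hab : Ioo a b ⊆ {θ | θ ∈ Icc θL θH ∧ 0 < IFun F₀ F θ}) (hθ : IFun F₀ F θ = 0) :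
    θ ∉ Ioo a b := fun h => (hab h).2.ne' hθ

theorem IsShadowDeriv.flattenBetween {θL θH qbar : ℝ} {F₀ F : CDF θL θH} {c' p : ℝ → ℝ}
    {θ₁ θ₂ : ℝ} (hp : IsShadowDeriv qbar F₀ c' F p) (h₁ : θ₁ ∈ Icc θL θH)
    (h₂ : θ₂ ∈ Icc θL θH) (hH : thetaHF F ∈ Icc θL θH) (h₁₂ : θ₁ ≤ θ₂)
    (hL₁ : thetaLF F ≤ θ₁) (hI₁ : IFun F₀ F θ₁ = 0) (hI₂ : IFun F₀ F θ₂ = 0) :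
    IsShadowDeriv qbar F₀ c' F (flattenBetween p θ₁ θ₂) := by
  obtain ⟨⟨M, hM⟩, hmono, hflat, hlo, hhi⟩ := hp
  refine ⟨⟨3 * M, fun θ hθ => abs_flattenBetween_le hM h₁ h₂ hθ⟩, hmono.flattenBetween h₁ h₂,
    fun a b hab x hx y hy => ?_, ?_, ?_⟩
  · exact flattenBetween_eq_of_notMem_Ioo (notMem_Ioo_of_IFun_eq_zero hab hI₁)
      (notMem_Ioo_of_IFun_eq_zero hab hI₂) hx hy (hflat a b hab x hx y hy)
  · rwa [flattenBetween_of_le hL₁]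
  · exact (flattenBetween_le hmono h₁ h₂ h₁₂ hH).trans hhi

theorem statement19_general {θL θH : ℝ}
    (F₀ : CDF θL θH)
    (c' : ℝ → ℝ)
    (qbar : ℝ)
    (F : CDF θL θH) (hsupp : F.supp ⊆ Set.Ioo θL θH)
    (p : ℝ → ℝ) (hp : IsShadowDeriv qbar F₀ c' F p)
    (θ₁ θ₂ : ℝ)
    (h1 : θ₁ ∈ Set.Ioc (thetaLF F) (thetaHF F))
    (h2 : θ₂ ∈ Set.Ioc (thetaLF F) (thetaHF F)) (h12 : θ₁ < θ₂)
    (hI1 : IFun F₀ F θ₁ = 0) (hI2 : IFun F₀ F θ₂ = 0) :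
    IsShadowDeriv qbar F₀ c' F
      (fun θ => if θ ≤ θ₁ then p θ else if θ ≤ θ₂ then p θ₁
        else p θ - (p θ₂ - p θ₁)) ∧
    IsICC qbar F₀ c' F
      (inducedAlloc qbar c' F
        (fun θ => if θ ≤ θ₁ then p θ else if θ ≤ θ₂ then p θ₁
          else p θ - (p θ₂ - p θ₁))) := by
  have hne := F.supp_nonempty_of_thetaLF_lt_thetaHF (h1.1.trans_le h1.2)
  have hL := le_thetaLF hsupp hne
  have hH := thetaHF_le hsupp hne
  have hθ₁ : θ₁ ∈ Icc θL θH := ⟨hL.trans h1.1.le, h1.2.trans hH⟩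
  have hθ₂ : θ₂ ∈ Icc θL θH := ⟨hL.trans h2.1.le, h2.2.trans hH⟩
  have hshadow : IsShadowDeriv qbar F₀ c' F (flattenBetween p θ₁ θ₂) :=
    hp.flattenBetween hθ₁ hθ₂ ⟨hθ₁.1.trans h1.2, hH⟩ h12.le h1.1.le hI1 hI2
  exact ⟨hshadow, _, hshadow, fun _ _ => rfl⟩

theorem statement19 {θL θH : ℝ} (hθL : 0 ≤ θL) (hθ : θL < θH)
    (F₀ : CDF θL θH) (hF₀ : IsPrior F₀)
    (c c' c'' : ℝ → ℝ) (hc : CostAssumptions θL θH F₀.mean c c' c'')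
    (qbar : ℝ) (hqbar : 0 < qbar)
    (F : CDF θL θH) (hF : IsSignal F₀ F) (hsupp : F.supp ⊆ Set.Ioo θL θH)
    (Q p : ℝ → ℝ) (hp : IsShadowDeriv qbar F₀ c' F p)
    (hQ : ∀ θ ∈ Set.Icc θL θH, Q θ = inducedAlloc qbar c' F p θ)
    (θ₁ θ₂ : ℝ)
    (h1 : θ₁ ∈ Set.Ioc (thetaLF F) (thetaHF F))
    (h2 : θ₂ ∈ Set.Ioc (thetaLF F) (thetaHF F)) (h12 : θ₁ < θ₂)
    (hI1 : IFun F₀ F θ₁ = 0) (hI2 : IFun F₀ F θ₂ = 0) :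
    IsShadowDeriv qbar F₀ c' F
      (fun θ => if θ ≤ θ₁ then p θ else if θ ≤ θ₂ then p θ₁
        else p θ - (p θ₂ - p θ₁)) ∧
    IsICC qbar F₀ c' F
      (inducedAlloc qbar c' F
        (fun θ => if θ ≤ θ₁ then p θ else if θ ≤ θ₂ then p θ₁
          else p θ - (p θ₂ - p θ₁))) :=
  statement19_general F₀ c' qbar F hsupp p hp θ₁ θ₂ h1 h2 h12 hI1 hI2
end
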